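/- arXiv:2505.20526 — 4 statements merged into one kernel-verified Lean document; each statement's English description precedes it below -/
import Mathlib

section
/- Let M be the Tamura–Nei transition matrix with parameters b, c, d and stationary distribution π (off-diagonal entries M₁₂=π₂c, M₁₃=π₃b, M₁₄=π₄b, M₂₁=π₁c, M₂₃=π₃b, M₂₄=π₄b, M₃₁=π₁b, M₃₂=π₂b, M₃₄=π₄d, M₄₁=π₁b, M₄₂=π₂b, M₄₃=π₃d, diagonal entries chosen so each row sums to 1). Then the transpose Mᵀ has eigenvectors u¹, u², u³, u⁴ (the π-orthogonal basis) with respective eigenvalues λ₁=1, λ₂=1−b, λ₃=1−π₁₂b−π₃₄d, λ₄=1−π₃₄b−π₁₂c. -/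
theorem TN93_eigenvectors
    (p1 p2 p3 p4 b c d : ℝ)
    (h1 : 0 < p1) (h2 : 0 < p2) (h3 : 0 < p3) (h4 : 0 < p4)
    (hsum : p1 + p2 + p3 + p4 = 1)
    (M : Matrix (Fin 4) (Fin 4) ℝ)
    (hM : M = !![1 - p2*c - p3*b - p4*b, p2*c, p3*b, p4*b;
                 p1*c, 1 - p1*c - p3*b - p4*b, p3*b, p4*b;
                 p1*b, p2*b, 1 - p1*b - p2*b - p4*d, p4*d;
                 p1*b, p2*b, p3*d, 1 - p1*b - p2*b - p3*d])
    (u1 u2 u3 u4 : Fin 4 → ℝ)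
    (hu1 : u1 = ![p1, p2, p3, p4])
    (hu2 : u2 = ![p1 * (p3 + p4), p2 * (p3 + p4), -(p3 * (p1 + p2)), -(p4 * (p1 + p2))])
    (hu3 : u3 = ![0, 0, p3 * p4 / (p3 + p4), -(p3 * p4) / (p3 + p4)])
    (hu4 : u4 = ![p1 * p2 / (p1 + p2), -(p1 * p2) / (p1 + p2), 0, 0]) :
    Matrix.mulVec M.transpose u1 = (1 : ℝ) • u1 ∧
    Matrix.mulVec M.transpose u2 = (1 - b) • u2 ∧
    Matrix.mulVec M.transpose u3 = (1 - (p1 + p2) * b - (p3 + p4) * d) • u3 ∧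
    Matrix.mulVec M.transpose u4 = (1 - (p3 + p4) * b - (p1 + p2) * c) • u4 := by
  subst hM hu1 hu2 hu3 hu4
  have h34 : p3 + p4 ≠ 0 := by positivity
  have h12 : p1 + p2 ≠ 0 := by positivity
  have hp1 : p1 = 1 - p2 - p3 - p4 := by linarith
  subst hp1
  refine ⟨?_, ?_, ?_, ?_⟩ <;>
  · funext i
    fin_cases i <;>
      simp [Matrix.mulVec, dotProduct, Fin.sum_univ_four, Matrix.vecHead,
        Matrix.vecTail] <;>
      first
        | (field_simp; ring)
        | ring
end

section
/- Any two Tamura–Nei matrices with the same stationary distribution π commute: if M(b,c,d) and M(b',c',d') are the TN93 matrices with parameters (b,c,d) and (b',c',d') respectively, then M(b,c,d)·M(b',c',d') = M(b',c',d')·M(b,c,d). -/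
/-- The Tamura–Nei (TN93) transition matrix with stationary distribution
`(p1,p2,p3,p4)` and parameters `b, c, d`; diagonal entries chosen so that
each row sums to 1. -/
def TN93 (p1 p2 p3 p4 b c d : ℝ) : Matrix (Fin 4) (Fin 4) ℝ :=
  !![1 - p2*c - p3*b - p4*b, p2*c, p3*b, p4*b;
     p1*c, 1 - p1*c - p3*b - p4*b, p3*b, p4*b;
     p1*b, p2*b, 1 - p1*b - p2*b - p4*d, p4*d;
     p1*b, p2*b, p3*d, 1 - p1*b - p2*b - p3*d]

theorem TN93_commute
    (p1 p2 p3 p4 : ℝ)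
    (h1 : 0 < p1) (h2 : 0 < p2) (h3 : 0 < p3) (h4 : 0 < p4)
    (hsum : p1 + p2 + p3 + p4 = 1)
    (b c d b' c' d' : ℝ) :
    TN93 p1 p2 p3 p4 b c d * TN93 p1 p2 p3 p4 b' c' d' =
      TN93 p1 p2 p3 p4 b' c' d' * TN93 p1 p2 p3 p4 b c d := by
  have h4' : p4 = 1 - p1 - p2 - p3 := by linarith
  subst h4'
  unfold TN93
  ext i j
  fin_cases i <;> fin_cases j <;>
    simp [Matrix.mul_apply, Fin.sum_univ_succ] <;> ring
end

section
/- The Felsenstein 81 model is multiplicatively closed: for a fixed distribution π summing to 1, the product of two F81 matrices M(b) and M(b') (off-diagonal entries M(b)_{ij} = π_j b, diagonal chosen so rows sum to 1) equals M(b'') for some parameter b''; explicitly, b'' = b + b' − b·b'. -/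
def F81 (p : Fin 4 → ℝ) (b : ℝ) : Matrix (Fin 4) (Fin 4) ℝ :=
  Matrix.of fun i j =>
    if i = j then 1 - ∑ k ∈ Finset.univ.erase i, p k * b else p j * b

theorem F81_mult_closed (p : Fin 4 → ℝ) (hsum : ∑ k, p k = 1) (b b' : ℝ) :
    F81 p b * F81 p b' = F81 p (b + b' - b * b') := by
  rw [Fin.sum_univ_four] at hsum
  ext i j
  fin_cases i <;> fin_cases j <;>
    simp [F81, Matrix.mul_apply, Fin.sum_univ_four, Finset.sum_erase_eq_sub] <;>
    first
    | linear_combination (-(b*b'*p 0))*hsum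
    | linear_combination (-(b*b'*p 1))*hsum
    | linear_combination (-(b*b'*p 2))*hsum
    | linear_combination (-(b*b'*p 3))*hsum
    | linear_combination (b*b'*(p 1+p 2+p 3))*hsum
    | linear_combination (b*b'*(p 0+p 2+p 3))*hsum
    | linear_combination (b*b'*(p 0+p 1+p 3))*hsum
    | linear_combination (b*b'*(p 0+p 1+p 2))*hsum
end

section
/- With a = π₁π₂π₃₄², b = −π₁₂²π₃₄², c = π₃π₄π₁₂², and the no-evolution coordinates ρ̄₁₁₄₄ = π₁₂/(π₁π₂), ρ̄₁₁₂₂ = 1/(π₁₂π₃₄), ρ̄₁₁₃₃ = π₃₄/(π₃π₄), ρ̄₁₂₄₄ = 1/(π₁π₂), ρ̄₁₂₂₂ = (π₃₄−π₁₂)/(π₁₂²π₃₄²), ρ̄₁₂₃₃ = −1/(π₃π₄), the identities a·ρ̄₁₁₄₄ + b·ρ̄₁₁₂₂ + c·ρ̄₁₁₃₃ = 0 and a·ρ̄₁₂₄₄ + b·ρ̄₁₂₂₂ + c·ρ̄₁₂₃₃ = 0 both hold. -/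
theorem rho_linear_relations
    (p1 p2 p3 p4 : ℝ)
    (h1 : 0 < p1) (h2 : 0 < p2) (h3 : 0 < p3) (h4 : 0 < p4)
    (hsum : p1 + p2 + p3 + p4 = 1) :
    (p1 * p2 * (p3 + p4) ^ 2) * ((p1 + p2) / (p1 * p2)) +
      (-((p1 + p2) ^ 2 * (p3 + p4) ^ 2)) * (1 / ((p1 + p2) * (p3 + p4))) +
      (p3 * p4 * (p1 + p2) ^ 2) * ((p3 + p4) / (p3 * p4)) = 0 ∧
    (p1 * p2 * (p3 + p4) ^ 2) * (1 / (p1 * p2)) +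
      (-((p1 + p2) ^ 2 * (p3 + p4) ^ 2)) *
        (((p3 + p4) - (p1 + p2)) / ((p1 + p2) ^ 2 * (p3 + p4) ^ 2)) +
      (p3 * p4 * (p1 + p2) ^ 2) * (-1 / (p3 * p4)) = 0 := by
  have n1 : p1*p2 ≠ 0 := by positivity
  have n3 : p3*p4 ≠ 0 := by positivity
  have n12 : p1+p2 ≠ 0 := by positivity
  have n34 : p3+p4 ≠ 0 := by positivity
  constructor
  · have e1 : (p1 * p2 * (p3 + p4) ^ 2) * ((p1 + p2) / (p1 * p2))
        = (p3 + p4) ^ 2 * (p1 + p2) := by field_simp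
    have e2 : (-((p1 + p2) ^ 2 * (p3 + p4) ^ 2)) * (1 / ((p1 + p2) * (p3 + p4)))
        = -((p1 + p2) * (p3 + p4)) := by field_simp
    have e3 : (p3 * p4 * (p1 + p2) ^ 2) * ((p3 + p4) / (p3 * p4))
        = (p1 + p2) ^ 2 * (p3 + p4) := by field_simp
    rw [e1, e2, e3]
    linear_combination ((p1 + p2) * (p3 + p4)) * hsum
  · have e1 : (p1 * p2 * (p3 + p4) ^ 2) * (1 / (p1 * p2)) = (p3 + p4) ^ 2 := by
      field_simp
    have e2 : (-((p1 + p2) ^ 2 * (p3 + p4) ^ 2)) *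
        (((p3 + p4) - (p1 + p2)) / ((p1 + p2) ^ 2 * (p3 + p4) ^ 2))
        = -((p3 + p4) - (p1 + p2)) := by field_simp
    have e3 : (p3 * p4 * (p1 + p2) ^ 2) * (-1 / (p3 * p4)) = -(p1 + p2) ^ 2 := by
      field_simp
    rw [e1, e2, e3]
    linear_combination ((p3 + p4) - (p1 + p2)) * hsum
end
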